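/- Let n ≥ 3, 1 ≤ p < ∞, 0 < α ≤ n, and ε > 0. Let ν be a positive Borel measure on R^n and let x ∈ H (so x_n > 0) with |x| ≥ 2. Suppose that ν(B(x,t)) ≤ ε^p (t/|x|)^{pn−α} for every t > 0. Then ∫_{{y : x_n/2 < |y − x| ≤ 3|x|}} |y − x|^{−pn} dν(y) ≤ ε^p |x|^{−pn} ( 3^{−α} + pn/α ) (|x|/x_n)^α (up to replacing 3^{−α} + pn/α by a constant of the same form depending only on p, n, α). -/

import Mathlib

open MeasureTheory Filter Metric Asymptotics ENNReal

/-- The last coordinate `x_n` of a point `x ∈ ℝⁿ`. -/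
noncomputable def lastCoord {n : ℕ} (x : EuclideanSpace ℝ (Fin n)) : ℝ :=
  if h : 0 < n then x ⟨n - 1, Nat.sub_lt h one_pos⟩ else 0

/-- The upper half-space `H = {x ∈ ℝⁿ : x_n > 0}`. -/
def upperHalfSpace (n : ℕ) : Set (EuclideanSpace ℝ (Fin n)) :=
  {x | 0 < lastCoord x}

/-- `ω_n = 2 π^{n/2} / Γ(n/2)`, the surface area of the unit sphere in ℝⁿ. -/
noncomputable def surfaceArea (n : ℕ) : ℝ :=
  2 * Real.pi ^ ((n : ℝ) / 2) / Real.Gamma ((n : ℝ) / 2)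

/-- The embedding `y' ↦ (y', 0)` of `ℝ^{n-1}` into `ℝⁿ`. -/
noncomputable def extendBdry {n : ℕ} (y' : EuclideanSpace ℝ (Fin (n - 1))) :
    EuclideanSpace ℝ (Fin n) :=
  (EuclideanSpace.equiv (Fin n) ℝ).symm
    (fun i => if h : (i : ℕ) < n - 1 then y' ⟨(i : ℕ), h⟩ else 0)

/-- The Poisson kernel `P(x, y') = 2 x_n / (ω_n |x - (y',0)|^n)` of the half-space. -/
noncomputable def poissonKernel' (n : ℕ) (x : EuclideanSpace ℝ (Fin n))
    (y' : EuclideanSpace ℝ (Fin (n - 1))) : ℝ :=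
  2 * lastCoord x / (surfaceArea n * ‖x - extendBdry y'‖ ^ n)

/-- The Poisson integral `v(x) = ∫_{ℝ^{n-1}} P(x,y') f(y') dy'`. -/
noncomputable def poissonIntegral (n : ℕ) (f : EuclideanSpace ℝ (Fin (n - 1)) → ℝ)
    (x : EuclideanSpace ℝ (Fin n)) : ℝ :=
  ∫ y', poissonKernel' n x y' * f y'

/-- The reflection `y* = (y', -y_n)` of `y` in the boundary hyperplane. -/
noncomputable def reflectPt {n : ℕ} (y : EuclideanSpace ℝ (Fin n)) :
    EuclideanSpace ℝ (Fin n) :=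
  (EuclideanSpace.equiv (Fin n) ℝ).symm
    (fun i => if (i : ℕ) = n - 1 then -(y i) else y i)

/-- The Green function `G(x,y) = r_n (|x - y*|^{2-n} - |x - y|^{2-n})` of the
half-space, where `r_n = 1/((n-2) ω_n)`. -/
noncomputable def greenFn (n : ℕ) (x y : EuclideanSpace ℝ (Fin n)) : ℝ :=
  (1 / (((n : ℝ) - 2) * surfaceArea n)) *
    (‖x - reflectPt y‖ ^ ((2 : ℝ) - n) - ‖x - y‖ ^ ((2 : ℝ) - n))

/-- The Green potential `h(x) = ∫_H G(x,y) dμ(y)`. -/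
noncomputable def greenPotential (n : ℕ) (μ : Measure (EuclideanSpace ℝ (Fin n)))
    (x : EuclideanSpace ℝ (Fin n)) : ℝ :=
  ∫ y in upperHalfSpace n, greenFn n x y ∂μ

/-- The maximal function of order `β` of a Borel measure `μ`:
`M(dμ)(x) = sup_{0<r<∞} μ(B(x,r))/r^β`. -/
noncomputable def maxFn {n : ℕ} (μ : Measure (EuclideanSpace ℝ (Fin n))) (β : ℝ)
    (x : EuclideanSpace ℝ (Fin n)) : ℝ≥0∞ :=
  ⨆ (r : ℝ) (_ : 0 < r), μ (Metric.ball x r) / ENNReal.ofReal (r ^ β)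

/- Split the region `|y - x| ≥ x_n/2` into dyadic shells
`r 2^k ≤ |y - x| < r 2^(k+1)` with `r = x_n/2`. On the `k`-th shell the integrand is at most
`(r 2^k)^(-pn)` and the shell lies in `B(x, r 2^(k+1))`, whose mass is at most
`ε^p (r 2^(k+1)/|x|)^(pn-α)`; so the `k`-th term is a constant times `(2^(-α))^k`, and the
geometric series converges because `α > 0`. -/

lemma rpow_neg_mul_rpow_dyadic (q α A : ℝ) {r : ℝ} (hr : 0 < r) (k : ℕ) :
    (r * 2 ^ k) ^ (-q) * (A * (r * 2 ^ (k + 1)) ^ (q - α)) =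
      2 ^ (q - α) * A * r ^ (-α) * ((2 : ℝ) ^ (-α)) ^ k := by
  have hu : 0 < r * 2 ^ k := by positivity
  have hpow : ((2 : ℝ) ^ (-α)) ^ k = ((2 : ℝ) ^ k) ^ (-α) :=
    Real.rpow_pow_comm zero_le_two _ _
  calc (r * 2 ^ k) ^ (-q) * (A * (r * 2 ^ (k + 1)) ^ (q - α))
      = A * 2 ^ (q - α) * ((r * 2 ^ k) ^ (-q) * (r * 2 ^ k) ^ (q - α)) := by
        rw [show r * 2 ^ (k + 1) = r * 2 ^ k * 2 by ring, Real.mul_rpow hu.le zero_le_two]; ring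
    _ = 2 ^ (q - α) * A * r ^ (-α) * ((2 : ℝ) ^ (-α)) ^ k := by
        rw [← Real.rpow_add hu, show -q + (q - α) = -α by ring,
          Real.mul_rpow hr.le (by positivity), hpow]
        ring

def dyadicShell {X : Type*} [PseudoMetricSpace X] (x : X) (r : ℝ) (k : ℕ) : Set X :=
  {y | r * 2 ^ k ≤ dist y x ∧ dist y x < r * 2 ^ (k + 1)}

section DyadicShells

variable {X : Type*} [PseudoMetricSpace X] (x : X)

lemma setOf_le_dist_subset_iUnion_dyadicShell {r : ℝ} (hr : 0 < r) :
    {y | r ≤ dist y x} ⊆ ⋃ k : ℕ, dyadicShell x r k := by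
  intro y hy
  obtain ⟨k, hk⟩ := exists_nat_pow_near ((one_le_div hr).2 hy) one_lt_two
  rw [le_div_iff₀ hr, div_lt_iff₀ hr, mul_comm _ r, mul_comm _ r] at hk
  exact Set.mem_iUnion.2 ⟨k, hk⟩

variable [MeasurableSpace X] {ν : Measure X} {x} {q α A r : ℝ}

lemma setLIntegral_dyadicShell_le (hq : 0 ≤ q) (hr : 0 < r)
    (hν : ∀ t, 0 < t → ν (ball x t) ≤ ENNReal.ofReal (A * t ^ (q - α))) (k : ℕ) :
    ∫⁻ y in dyadicShell x r k, ENNReal.ofReal (dist y x ^ (-q)) ∂ν ≤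
      ENNReal.ofReal (2 ^ (q - α) * A * r ^ (-α) * ((2 : ℝ) ^ (-α)) ^ k) := by
  have hrk : 0 < r * 2 ^ k := by positivity
  calc ∫⁻ y in dyadicShell x r k, ENNReal.ofReal (dist y x ^ (-q)) ∂ν
      ≤ ∫⁻ _ in dyadicShell x r k, ENNReal.ofReal ((r * 2 ^ k) ^ (-q)) ∂ν :=
        setLIntegral_mono measurable_const fun y hy =>
          ENNReal.ofReal_le_ofReal (Real.rpow_le_rpow_of_nonpos hrk hy.1 (neg_nonpos.2 hq))
    _ = ENNReal.ofReal ((r * 2 ^ k) ^ (-q)) * ν (dyadicShell x r k) := setLIntegral_const _ _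
    _ ≤ ENNReal.ofReal ((r * 2 ^ k) ^ (-q)) * ν (ball x (r * 2 ^ (k + 1))) := by
        gcongr
        exact fun y hy => mem_ball.2 hy.2
    _ ≤ ENNReal.ofReal ((r * 2 ^ k) ^ (-q)) *
          ENNReal.ofReal (A * (r * 2 ^ (k + 1)) ^ (q - α)) := by
        gcongr
        exact hν _ (by positivity)
    _ = ENNReal.ofReal (2 ^ (q - α) * A * r ^ (-α) * ((2 : ℝ) ^ (-α)) ^ k) := by
        rw [← ENNReal.ofReal_mul (by positivity), rpow_neg_mul_rpow_dyadic q α A hr k]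

lemma tsum_ofReal_mul_geometric {c g : ℝ} (hc : 0 ≤ c) (hg₀ : 0 ≤ g) (hg₁ : g < 1) :
    ∑' k : ℕ, ENNReal.ofReal (c * g ^ k) = ENNReal.ofReal (c / (1 - g)) := by
  rw [← ENNReal.ofReal_tsum_of_nonneg (fun k => by positivity)
      ((summable_geometric_of_lt_one hg₀ hg₁).mul_left c),
    tsum_mul_left, tsum_geometric_of_lt_one hg₀ hg₁, div_eq_mul_inv]

theorem setLIntegral_rpow_neg_dist_le (hq : 0 ≤ q) (hα : 0 < α) (hA : 0 ≤ A) (hr : 0 < r)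
    (hν : ∀ t, 0 < t → ν (ball x t) ≤ ENNReal.ofReal (A * t ^ (q - α))) :
    ∫⁻ y in {y | r ≤ dist y x}, ENNReal.ofReal (dist y x ^ (-q)) ∂ν ≤
      ENNReal.ofReal (2 ^ (q - α) / (1 - 2 ^ (-α)) * A * r ^ (-α)) := by
  have hg₁ : (2 : ℝ) ^ (-α) < 1 :=
    Real.rpow_lt_one_of_one_lt_of_neg one_lt_two (neg_neg_of_pos hα)
  calc ∫⁻ y in {y | r ≤ dist y x}, ENNReal.ofReal (dist y x ^ (-q)) ∂ν
      ≤ ∑' k : ℕ, ∫⁻ y in dyadicShell x r k,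
          ENNReal.ofReal (dist y x ^ (-q)) ∂ν :=
        (lintegral_mono_set (setOf_le_dist_subset_iUnion_dyadicShell x hr)).trans
          (lintegral_iUnion_le _ _)
    _ ≤ ∑' k : ℕ, ENNReal.ofReal (2 ^ (q - α) * A * r ^ (-α) * ((2 : ℝ) ^ (-α)) ^ k) :=
        ENNReal.tsum_le_tsum (setLIntegral_dyadicShell_le hq hr hν)
    _ = ENNReal.ofReal (2 ^ (q - α) / (1 - 2 ^ (-α)) * A * r ^ (-α)) := by
        rw [tsum_ofReal_mul_geometric (by positivity) (by positivity) hg₁]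
        ring_nf

end DyadicShells

theorem stmt17_general (n : ℕ) (p α : ℝ) (hp : 1 ≤ p)
    (hα₁ : 0 < α) :
    ∃ C : ℝ, 0 < C ∧
      ∀ ε : ℝ, 0 < ε → ∀ ν : Measure (EuclideanSpace ℝ (Fin n)),
        ∀ x ∈ upperHalfSpace n, 2 ≤ ‖x‖ →
        (∀ t : ℝ, 0 < t →
          ν (Metric.ball x t) ≤ ENNReal.ofReal (ε ^ p * (t / ‖x‖) ^ (p * n - α))) →
        ∫⁻ y in {y : EuclideanSpace ℝ (Fin n) |
            lastCoord x / 2 < ‖y - x‖ ∧ ‖y - x‖ ≤ 3 * ‖x‖},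
          ENNReal.ofReal (‖y - x‖ ^ (-(p * n))) ∂ν ≤
        ENNReal.ofReal (C * ε ^ p * ‖x‖ ^ (-(p * n)) * (‖x‖ / lastCoord x) ^ α) := by
  have hg₁ : (2 : ℝ) ^ (-α) < 1 :=
    Real.rpow_lt_one_of_one_lt_of_neg one_lt_two (neg_neg_of_pos hα₁)
  refine ⟨2 ^ (p * n) / (1 - 2 ^ (-α)), div_pos (by positivity) (sub_pos.2 hg₁), ?_⟩
  intro ε hε ν x (hx : 0 < lastCoord x) hx2 hν
  have hX : 0 < ‖x‖ := two_pos.trans_le hx2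
  have hν' : ∀ t, 0 < t → ν (ball x t) ≤
      ENNReal.ofReal (ε ^ p * ‖x‖ ^ (α - p * n) * t ^ (p * n - α)) := fun t ht => by
    have h := hν t ht
    rwa [Real.div_rpow ht.le hX.le, div_eq_mul_inv, ← Real.rpow_neg hX.le, neg_sub,
      mul_comm (t ^ _), ← mul_assoc] at h
  calc _ ≤ ∫⁻ y in {y | lastCoord x / 2 ≤ ‖y - x‖},
          ENNReal.ofReal (‖y - x‖ ^ (-(p * n))) ∂ν :=
        lintegral_mono_set fun y hy => hy.1.le
    _ ≤ _ := by
      simpa only [dist_eq_norm] using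
        setLIntegral_rpow_neg_dist_le (by positivity) hα₁ (by positivity) (half_pos hx) hν'
    _ = _ := by
      congr 1
      rw [Real.div_rpow hx.le zero_le_two, Real.div_rpow hX.le hx.le, Real.rpow_sub hX,
        Real.rpow_neg hX.le, Real.rpow_neg hx.le, Real.rpow_neg zero_le_two,
        Real.rpow_sub two_pos]
      field_simp

/-- The annulus estimate from the proofs of Theorems 1 and 2: if
`ν(B(x,t)) ≤ ε^p (t/|x|)^{pn-α}` for all `t > 0`, then
`∫_{x_n/2 < |y-x| ≤ 3|x|} |y-x|^{-pn} dν(y) ≤ C ε^p |x|^{-pn} (|x|/x_n)^α`,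
where `C` is a constant of the form `3^{-α} + pn/α` depending only on `p, n, α`. -/
theorem stmt17 (n : ℕ) (hn : 3 ≤ n) (p α : ℝ) (hp : 1 ≤ p)
    (hα₁ : 0 < α) (hα₂ : α ≤ n) :
    ∃ C : ℝ, 0 < C ∧
      ∀ ε : ℝ, 0 < ε → ∀ ν : Measure (EuclideanSpace ℝ (Fin n)),
        ∀ x ∈ upperHalfSpace n, 2 ≤ ‖x‖ →
        (∀ t : ℝ, 0 < t →
          ν (Metric.ball x t) ≤ ENNReal.ofReal (ε ^ p * (t / ‖x‖) ^ (p * n - α))) →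
        ∫⁻ y in {y : EuclideanSpace ℝ (Fin n) |
            lastCoord x / 2 < ‖y - x‖ ∧ ‖y - x‖ ≤ 3 * ‖x‖},
          ENNReal.ofReal (‖y - x‖ ^ (-(p * n))) ∂ν ≤
        ENNReal.ofReal (C * ε ^ p * ‖x‖ ^ (-(p * n)) * (‖x‖ / lastCoord x) ^ α) :=
  stmt17_general n p α hp hα₁
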